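/- Assume that S is a complete totally ordered set, that the pay-off function μ is convex, and that 𝓛 satisfies the ascending chain condition and the μ_A-descending chain condition. Then there exists a unique natural number n ≥ 1 and a unique strictly increasing finite sequence ⊥ = a₀ < a₁ < ⋯ < aₙ = ⊤ in 𝓛 such that: (1) for every i ∈ {1,…,n} and every z ∈ 𝓛 with a_{i-1} < z ≤ a_i one has μ_A(a_{i-1}, z) ≤ μ_A(a_{i-1}, a_i) (the restriction of the Harder-Narasimhan game to [a_{i-1}, a_i] is semi-stable); and (2) μ_A(a₀,a₁) > μ_A(a₁,a₂) > ⋯ > μ_A(a_{n-1},aₙ). -/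
import Mathlib


variable {L : Type*} {S : Type*}

/-- `μ_max(a,y) := sup { μ(a,b) | b ∈ 𝓛, a < b ≤ y }`. -/
def muMax [Preorder L] [CompleteLattice S] (μ : L → L → S) (a y : L) : S :=
  ⨆ b ∈ {b : L | a < b ∧ b ≤ y}, μ a b

/-- `μ_A(x,y) := inf { μ_max(a,y) | a ∈ 𝓛, x ≤ a < y }`. -/
def muA [Preorder L] [CompleteLattice S] (μ : L → L → S) (x y : L) : S :=
  ⨅ a ∈ {a : L | x ≤ a ∧ a < y}, muMax μ a y

/-- The pay-off function `μ` is convex if `μ(x ⊓ y, x) ≤ μ(y, x ⊔ y)` whenever `x ≰ y`. -/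
def ConvexPayoff [Lattice L] [CompleteLattice S] (μ : L → L → S) : Prop :=
  ∀ x y : L, ¬ x ≤ y → μ (x ⊓ y) x ≤ μ y (x ⊔ y)


section Basic
variable [Lattice L] [CompleteLattice S] (μ : L → L → S)

lemma le_muMax {a y b : L} (h1 : a < b) (h2 : b ≤ y) : μ a b ≤ muMax μ a y :=
  le_biSup _ (show b ∈ {b : L | a < b ∧ b ≤ y} from ⟨h1, h2⟩)

lemma muMax_le {a y : L} {s : S} (h : ∀ b, a < b → b ≤ y → μ a b ≤ s) :
    muMax μ a y ≤ s :=
  iSup₂_le fun b hb => h b hb.1 hb.2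

lemma muMax_mono_right {a y y' : L} (h : y ≤ y') : muMax μ a y ≤ muMax μ a y' :=
  muMax_le μ fun b hb hby => le_muMax μ hb (hby.trans h)

lemma muA_le_muMax {x y a : L} (h1 : x ≤ a) (h2 : a < y) : muA μ x y ≤ muMax μ a y :=
  biInf_le _ (show a ∈ {a : L | x ≤ a ∧ a < y} from ⟨h1, h2⟩)

lemma le_muA {x y : L} {s : S} (h : ∀ a, x ≤ a → a < y → s ≤ muMax μ a y) :
    s ≤ muA μ x y :=
  le_iInf₂ fun a ha => h a ha.1 ha.2

lemma muA_mono_left {x x' y : L} (h : x ≤ x') : muA μ x y ≤ muA μ x' y :=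
  le_muA μ fun a ha hay => muA_le_muMax μ (h.trans ha) hay

variable {μ} (hconv : ConvexPayoff μ)
include hconv

/-- Key convexity transfer: `μ_max(w ⊓ b, b) ≤ μ_max(w, c)` when `b ≰ w`, `w ⊔ b ≤ c`. -/
lemma muMax_key {w b c : L} (h : ¬ b ≤ w) (hc : w ⊔ b ≤ c) :
    muMax μ (w ⊓ b) b ≤ muMax μ w c := by
  apply muMax_le μ
  intro v hv1 hv2
  have hvw : ¬ v ≤ w := fun hvw =>
    absurd (le_inf hvw hv2) (not_le_of_gt hv1)
  have hinf : v ⊓ w = w ⊓ b := by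
    apply le_antisymm
    · exact le_inf inf_le_right (inf_le_left.trans hv2)
    · exact le_inf (le_of_lt hv1) inf_le_left
  calc μ (w ⊓ b) v = μ (v ⊓ w) v := by rw [hinf]
    _ ≤ μ w (v ⊔ w) := hconv v w hvw
    _ ≤ muMax μ w c := le_muMax μ (lt_of_le_of_ne le_sup_right
        (fun hw => hvw (hw ▸ le_sup_left))) (sup_le ((hv2.trans le_sup_right).trans hc)
        (le_sup_left.trans hc))

/-- Convexity at the level of `μ_A`. -/
lemma muA_convex {w b : L} (h : ¬ b ≤ w) :
    muA μ (w ⊓ b) b ≤ muA μ w (w ⊔ b) := by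
  apply le_muA μ
  intro u hu1 hu2
  have hbu : ¬ b ≤ u := fun hbu => not_le_of_gt hu2 (sup_le hu1 hbu)
  calc muA μ (w ⊓ b) b ≤ muMax μ (u ⊓ b) b :=
        muA_le_muMax μ (le_inf (inf_le_left.trans hu1) inf_le_right)
          (inf_lt_right.2 hbu)
    _ ≤ muMax μ u (w ⊔ b) := muMax_key hconv hbu (sup_le (le_of_lt hu2) le_sup_right)

/-- A piece-to-whole bound: if `a < b`, `a ≤ w`, `b ≰ w`, `w ⊔ b ≤ c` then `μ_A(a,b) ≤ μ_max(w,c)`. -/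
lemma muA_le_muMax_of_not_le {a b w c : L} (hab : a < b) (haw : a ≤ w) (hbw : ¬ b ≤ w)
    (hwc : w ⊔ b ≤ c) : muA μ a b ≤ muMax μ w c :=
  (muA_le_muMax μ (le_inf haw hab.le) (inf_lt_right.2 hbw)).trans (muMax_key hconv hbw hwc)

end Basic

section Lin
variable [Lattice L] [CompleteLinearOrder S] {μ : L → L → S} (hconv : ConvexPayoff μ)
include hconv

/-- Join lemma: `min (μ_A(a,b₁)) (μ_A(a,b₂)) ≤ μ_A(a, b₁ ⊔ b₂)`. -/
lemma muA_sup {a b₁ b₂ : L} (h1 : a < b₁) (h2 : a < b₂) :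
    min (muA μ a b₁) (muA μ a b₂) ≤ muA μ a (b₁ ⊔ b₂) := by
  apply le_muA μ
  intro w hw1 hw2
  rcases (not_and_or.mp fun hh => not_le_of_gt hw2 (sup_le hh.1 hh.2)) with hb | hb
  · exact (min_le_left _ _).trans
      (muA_le_muMax_of_not_le hconv h1 hw1 hb (sup_le hw2.le le_sup_left))
  · exact (min_le_right _ _).trans
      (muA_le_muMax_of_not_le hconv h2 hw1 hb (sup_le hw2.le le_sup_right))

/-- Gluing lemma: `min (μ_A(a,b)) (μ_A(b,c)) ≤ μ_A(a,c)` for `a < b < c`. -/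
lemma muA_glue {a b c : L} (h1 : a < b) (h2 : b < c) :
    min (muA μ a b) (muA μ b c) ≤ muA μ a c := by
  apply le_muA μ
  intro w hw1 hw2
  by_cases hb : b ≤ w
  · exact (min_le_right _ _).trans (muA_le_muMax μ hb hw2)
  · exact (min_le_left _ _).trans
      (muA_le_muMax_of_not_le hconv h1 hw1 hb (sup_le hw2.le h2.le))

end Lin

/-- A maximal destabilizing step: `[a,b]` is semistable and everything strictly
above `b` has strictly smaller game value. -/
def IsStep [Lattice L] [CompleteLattice S] (μ : L → L → S) (a b : L) : Prop :=
  a < b ∧ (∀ z, a < z → z ≤ b → muA μ a z ≤ muA μ a b) ∧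
    (∀ z, b < z → muA μ a z < muA μ a b)

/-- A peak: everything strictly above `b` has strictly smaller game value. -/
def IsPeak [Lattice L] [CompleteLattice S] (μ : L → L → S) (a b : L) : Prop :=
  a < b ∧ ∀ z, b < z → muA μ a z < muA μ a b

lemma exists_max_of_acc {α : Type*} [Preorder α] (hacc : ¬ ∃ f : ℕ → α, StrictMono f)
    {T : Set α} (hT : T.Nonempty) : ∃ b ∈ T, ∀ c ∈ T, ¬ b < c := by
  by_contra hcon
  push_neg at hcon
  obtain ⟨t0, ht0⟩ := hT
  choose g hg1 hg2 using hcon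
  let seq : ℕ → {x // x ∈ T} := fun n =>
    Nat.rec ⟨t0, ht0⟩ (fun _ p => ⟨g p.1 p.2, hg1 p.1 p.2⟩) n
  exact hacc ⟨fun n => (seq n).1, strictMono_nat_of_lt_succ fun n => hg2 _ _⟩

section Lin2
variable [Lattice L] [CompleteLinearOrder S] {μ : L → L → S}

lemma isStep_unique (hconv : ConvexPayoff μ) {a b b' : L}
    (hb : IsStep μ a b) (hb' : IsStep μ a b') : b = b' := by
  by_contra hne
  by_cases h1 : b ≤ b'
  · have hlt : b < b' := lt_of_le_of_ne h1 hne
    exact absurd (hb'.2.1 b hb.1 h1) (not_le_of_gt (hb.2.2 b' hlt))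
  by_cases h2 : b' ≤ b
  · have hlt : b' < b := lt_of_le_of_ne h2 (Ne.symm hne)
    exact absurd (hb.2.1 b' hb'.1 h2) (not_le_of_gt (hb'.2.2 b hlt))
  have A := hb.2.2 _ (left_lt_sup.2 h2)
  have B := hb'.2.2 _ (right_lt_sup.2 h1)
  exact absurd (muA_sup hconv hb.1 hb'.1) (not_le_of_gt (lt_min A B))

lemma exists_peak (hacc : ¬ ∃ f : ℕ → L, StrictMono f) {a b : L} (hab : a < b) :
    ∃ c, IsPeak μ a c ∧ b ≤ c ∧ muA μ a b ≤ muA μ a c := by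
  obtain ⟨c, hcT, hmax⟩ := exists_max_of_acc hacc
    (T := {c | b ≤ c ∧ muA μ a b ≤ muA μ a c}) ⟨b, le_rfl, le_rfl⟩
  refine ⟨c, ⟨hab.trans_le hcT.1, fun z hz => ?_⟩, hcT.1, hcT.2⟩
  have hzT : z ∉ {c | b ≤ c ∧ muA μ a b ≤ muA μ a c} := fun hzT => hmax z hzT hz
  have : ¬ muA μ a b ≤ muA μ a z := fun hh => hzT ⟨hcT.1.trans hz.le, hh⟩
  exact lt_of_lt_of_le (not_le.1 this) hcT.2

lemma exists_isStep [BoundedOrder L] (hconv : ConvexPayoff μ)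
    (hacc : ¬ ∃ f : ℕ → L, StrictMono f)
    (hdcc : ∀ a : L, ¬ ∃ f : ℕ → L, (∀ n, a < f n) ∧ StrictAnti f ∧
      StrictMono (fun n => muA μ a (f n)))
    {a : L} (ha : a < ⊤) : ∃ b, IsStep μ a b := by
  by_contra hno
  push_neg at hno
  have key2 : ∀ b, IsPeak μ a b → ∃ c, IsPeak μ a c ∧ c < b ∧ muA μ a b < muA μ a c := by
    intro b hb
    have hns : ¬ ∀ z, a < z → z ≤ b → muA μ a z ≤ muA μ a b := fun hs =>
      hno b ⟨hb.1, hs, hb.2⟩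
    push_neg at hns
    obtain ⟨z, hz1, hz2, hz3⟩ := hns
    obtain ⟨c, hc, hzc, hVzc⟩ := exists_peak (μ := μ) hacc hz1
    have hVc : muA μ a b < muA μ a c := hz3.trans_le hVzc
    refine ⟨c, hc, ?_, hVc⟩
    by_contra hcb
    have hcb' : ¬ c ≤ b := fun h' =>
      hcb (lt_of_le_of_ne h' fun he => absurd hVc (he ▸ lt_irrefl _))
    have h3 := muA_sup hconv hb.1 hc.1
    rw [min_eq_left hVc.le] at h3
    exact absurd h3 (not_le_of_gt (hb.2 _ (left_lt_sup.2 hcb')))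
  obtain ⟨b0, hb0, -, -⟩ := exists_peak (μ := μ) hacc ha
  choose g hg1 hg2 hg3 using key2
  let seq : ℕ → {x // IsPeak μ a x} := fun n =>
    Nat.rec ⟨b0, hb0⟩ (fun _ p => ⟨g p.1 p.2, hg1 p.1 p.2⟩) n
  exact hdcc a ⟨fun n => (seq n).1, fun n => (seq n).2.1,
    strictAnti_nat_of_succ_lt fun n => hg2 _ _,
    strictMono_nat_of_lt_succ fun n => hg3 _ _⟩

end Lin2

section Filt
variable [Lattice L] [CompleteLinearOrder S] {μ : L → L → S}

lemma filt_le {c : ℕ → L} {n : ℕ} (hmono : ∀ i < n, c i < c (i + 1))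
    {i j : ℕ} (hij : i ≤ j) (hjn : j ≤ n) : c i ≤ c j := by
  induction j with
  | zero => obtain rfl := Nat.le_zero.mp hij; exact le_rfl
  | succ k ih =>
    rcases Nat.eq_or_lt_of_le hij with rfl | h
    · exact le_rfl
    · exact (ih (by omega) (by omega)).trans (hmono k (by omega)).le

lemma filt_lambda_le {c : ℕ → L} {n : ℕ}
    (hdec : ∀ i, i + 1 < n → muA μ (c (i + 1)) (c (i + 2)) < muA μ (c i) (c (i + 1)))
    {i j : ℕ} (hij : i ≤ j) (hjn : j < n) :
    muA μ (c j) (c (j + 1)) ≤ muA μ (c i) (c (i + 1)) := by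
  induction j with
  | zero => obtain rfl := Nat.le_zero.mp hij; exact le_rfl
  | succ k ih =>
    rcases Nat.eq_or_lt_of_le hij with rfl | h
    · exact le_rfl
    · exact (hdec k hjn).le.trans (ih (by omega) (by omega))

/-- Any HN filtration's first term coincides with any step at the base point. -/
lemma filt_first_eq_step [BoundedOrder L] (hconv : ConvexPayoff μ) {c : ℕ → L} {n : ℕ}
    (hn : 1 ≤ n) (htop : c n = ⊤)
    (hmono : ∀ i < n, c i < c (i + 1))
    (hss : ∀ i < n, ∀ z, c i < z → z ≤ c (i + 1) → muA μ (c i) z ≤ muA μ (c i) (c (i + 1)))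
    (hdec : ∀ i, i + 1 < n → muA μ (c (i + 1)) (c (i + 2)) < muA μ (c i) (c (i + 1)))
    {b : L} (hb : IsStep μ (c 0) b) : c 1 = b := by
  classical
  have hPn : b ≤ c n := htop ▸ le_top
  have hP : ∃ j, b ≤ c j := ⟨n, hPn⟩
  obtain ⟨j, hjle, hjmin⟩ : ∃ j, b ≤ c j ∧ ∀ i, i < j → ¬ b ≤ c i :=
    ⟨Nat.find hP, Nat.find_spec hP, fun i hi => Nat.find_min hP hi⟩
  have hjn : j ≤ n := by
    by_contra hh
    exact hjmin n (by omega) hPn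
  have hj0 : j ≠ 0 := fun h0 => absurd (h0 ▸ hjle) (not_le_of_gt hb.1)
  obtain ⟨k, rfl⟩ : ∃ k, j = k + 1 := ⟨j - 1, by omega⟩
  rcases Nat.eq_zero_or_pos k with rfl | hk
  · -- `j = 1` : `b ≤ c 1`
    by_cases hc1b : c 1 ≤ b
    · exact le_antisymm hc1b hjle
    · have hblt : b < c 1 := lt_of_le_of_ne hjle fun he => hc1b (he ▸ le_rfl)
      exact absurd (hss 0 hn b hb.1 hjle) (not_le_of_gt (hb.2.2 (c 1) hblt))
  · -- `j = k + 1 ≥ 2`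
    have hnb : ¬ b ≤ c k := hjmin k (by omega)
    have e1 : muA μ (c 0) b ≤ muA μ (c k ⊓ b) b :=
      muA_mono_left μ (le_inf (filt_le hmono (Nat.zero_le _) (by omega)) hb.1.le)
    have e2 : muA μ (c k ⊓ b) b ≤ muA μ (c k) (c k ⊔ b) := muA_convex hconv hnb
    have e3 : muA μ (c k) (c k ⊔ b) ≤ muA μ (c k) (c (k + 1)) :=
      hss k (by omega) _ (left_lt_sup.2 hnb) (sup_le (hmono k (by omega)).le hjle)
    have e4 : muA μ (c k) (c (k + 1)) ≤ muA μ (c 1) (c 2) :=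
      filt_lambda_le hdec (by omega) (by omega)
    have e5 : muA μ (c 1) (c 2) < muA μ (c 0) (c 1) := hdec 0 (by omega)
    have hstar : muA μ (c 0) b < muA μ (c 0) (c 1) :=
      lt_of_le_of_lt (e1.trans (e2.trans (e3.trans e4))) e5
    have hnb1 : ¬ b ≤ c 1 := hjmin 1 (by omega)
    by_cases hc1b : c 1 ≤ b
    · have hlt : c 1 < b := lt_of_le_of_ne hc1b fun he => hnb1 (he ▸ le_rfl)
      exact absurd (hb.2.1 (c 1) (hmono 0 hn) hc1b) (not_le_of_gt hstar)
    · have A := hb.2.2 _ (left_lt_sup.2 hc1b)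
      have B := muA_sup hconv (hmono 0 hn) hb.1
      rw [sup_comm (c 1) b] at B
      have hmin : min (muA μ (c 0) (c 1)) (muA μ (c 0) b) < muA μ (c 0) b :=
        lt_of_le_of_lt B A
      have hl : muA μ (c 0) (c 1) < muA μ (c 0) b := by
        rcases min_lt_iff.mp hmin with h | h
        exacts [h, absurd h (lt_irrefl _)]
      exact absurd hstar (asymm hl)

end Filt

/-- A Harder–Narasimhan filtration for the game with pay-off function `μ`:
a strictly increasing sequence `⊥ = a 0 < a 1 < ⋯ < a n = ⊤` such that each
restricted game on `[a i, a (i+1)]` is semi-stable and the values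
`μ_A(a i, a (i+1))` are strictly decreasing. -/
def IsHNFiltration [Lattice L] [BoundedOrder L] [CompleteLattice S]
    (μ : L → L → S) (n : ℕ) (a : ℕ → L) : Prop :=
  1 ≤ n ∧ a 0 = ⊥ ∧ a n = ⊤ ∧
  (∀ i < n, a i < a (i + 1)) ∧
  (∀ i < n, ∀ z : L, a i < z → z ≤ a (i + 1) →
    muA μ (a i) z ≤ muA μ (a i) (a (i + 1))) ∧
  (∀ i : ℕ, i + 1 < n → muA μ (a (i + 1)) (a (i + 2)) < muA μ (a i) (a (i + 1)))

theorem stmt7 [Lattice L] [BoundedOrder L] [CompleteLinearOrder S]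
    (hbt : (⊥ : L) ≠ ⊤) (μ : L → L → S) (hconv : ConvexPayoff μ)
    (hacc : ¬ ∃ f : ℕ → L, StrictMono f)
    (hdcc : ∀ a : L, ¬ ∃ f : ℕ → L, (∀ n, a < f n) ∧ StrictAnti f ∧
      StrictMono (fun n => muA μ a (f n))) :
    (∃ n : ℕ, ∃ a : ℕ → L, IsHNFiltration μ n a) ∧
    (∀ n m : ℕ, ∀ a b : ℕ → L, IsHNFiltration μ n a → IsHNFiltration μ m b →
      n = m ∧ ∀ i ≤ n, a i = b i) := by
  classical
  constructor
  · -- existence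
    have hstep : ∀ a : L, ∃ b, a < ⊤ → IsStep μ a b := by
      intro a
      by_cases ha : a < ⊤
      · obtain ⟨b, hb⟩ := exists_isStep hconv hacc hdcc ha
        exact ⟨b, fun _ => hb⟩
      · exact ⟨⊤, fun h => absurd h ha⟩
    choose G hG using hstep
    set seq : ℕ → L := fun n => G^[n] ⊥ with hseq
    have hsucc : ∀ n, seq (n + 1) = G (seq n) := fun n => Function.iterate_succ_apply' G n ⊥
    have hterm : ∃ n, seq n = ⊤ := by
      by_contra hh
      push_neg at hh
      refine hacc ⟨seq, strictMono_nat_of_lt_succ fun n => ?_⟩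
      have := (hG _ (lt_top_iff_ne_top.2 (hh n))).1
      rw [hsucc n]; exact this
    obtain ⟨N, hN, hNmin⟩ : ∃ N, seq N = ⊤ ∧ ∀ i < N, seq i ≠ ⊤ :=
      ⟨Nat.find hterm, Nat.find_spec hterm, fun i hi => Nat.find_min hterm hi⟩
    have hstepi : ∀ i < N, IsStep μ (seq i) (seq (i + 1)) := by
      intro i hi
      rw [hsucc i]
      exact hG _ (lt_top_iff_ne_top.2 (hNmin i hi))
    refine ⟨N, seq, ?_, rfl, hN, fun i hi => (hstepi i hi).1,
      fun i hi => (hstepi i hi).2.1, ?_⟩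
    · rcases Nat.eq_zero_or_pos N with rfl | h
      · exact absurd hN hbt
      · exact h
    · intro i hi
      have s1 := hstepi i (by omega)
      have s2 := hstepi (i + 1) hi
      have A := s1.2.2 (seq (i + 2)) s2.1
      have B := muA_glue hconv s1.1 s2.1
      have hmin := lt_of_le_of_lt B A
      rcases min_lt_iff.mp hmin with h | h
      exacts [absurd h (lt_irrefl _), h]
  · -- uniqueness
    intro n m a b ha hb
    obtain ⟨hn1, ha0, han, hamono, hass, hadec⟩ := ha
    obtain ⟨hm1, hb0, hbm, hbmono, hbss, hbdec⟩ := hb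
    have key : ∀ (n : ℕ) (c : ℕ → L), c n = ⊤ → (∀ i < n, c i < c (i + 1)) →
        (∀ i < n, ∀ z, c i < z → z ≤ c (i + 1) → muA μ (c i) z ≤ muA μ (c i) (c (i + 1))) →
        (∀ i, i + 1 < n → muA μ (c (i + 1)) (c (i + 2)) < muA μ (c i) (c (i + 1))) →
        ∀ i < n, ∀ s, IsStep μ (c i) s → c (i + 1) = s := by
      intro n c htop hmono hss hdec i hi s hs
      exact filt_first_eq_step hconv (c := fun k => c (i + k)) (n := n - i) (by omega)
        (by show c (i + (n - i)) = ⊤; rw [show i + (n - i) = n by omega]; exact htop)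
        (fun k hk => hmono (i + k) (by omega))
        (fun k hk z => hss (i + k) (by omega) z)
        (fun k hk => hdec (i + k) (by omega)) hs
    have hboth : ∀ i, i ≤ min n m → a i = b i := by
      intro i hi
      induction i with
      | zero => rw [ha0, hb0]
      | succ k ih =>
        have hab : a k = b k := ih (by omega)
        have hkn : k < n := by omega
        have hkm : k < m := by omega
        have hktop : a k < ⊤ := by
          have h2 : a (k + 1) ≤ a n := filt_le hamono (by omega) le_rfl
          exact lt_of_lt_of_le (hamono k hkn) (han ▸ h2)
        obtain ⟨s, hs⟩ := exists_isStep hconv hacc hdcc hktop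
        have e1 := key n a han hamono hass hadec k hkn s hs
        have e2 := key m b hbm hbmono hbss hbdec k hkm s (hab ▸ hs)
        rw [e1, e2]
    have hnm : n = m := by
      by_contra hne
      rcases Nat.lt_or_ge n m with h | h
      · have hbn : b n = ⊤ := (hboth n (by omega)) ▸ han
        exact absurd (hbn ▸ hbmono n h) not_top_lt
      · have hm : m < n := by omega
        have hanm : a m = ⊤ := (hboth m (by omega)).symm ▸ hbm
        exact absurd (hanm ▸ hamono m hm) not_top_lt
    exact ⟨hnm, fun i hi => hboth i (by omega)⟩
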